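/- arXiv:0712.1228 — 3 statements merged into one kernel-verified Lean document; each statement's English description precedes it below -/
import Mathlib

section
/- Let H ⊆ G be algebra groups over F_q. Then Ind_H^G(χ) is a superclass function of G for every superclass function χ of H if and only if SInd_H^G(χ) = Ind_H^G(χ) for every superclass function χ of H. -/
/-!
STATEMENT 3: Let H ⊆ G be algebra groups over F_q.  Then Ind_H^G(χ) is a superclass
function of G for every superclass function χ of H if and only if
SInd_H^G(χ) = Ind_H^G(χ) for every superclass function χ of H.
-/
open scoped Classical

noncomputable section

def setFinset {α : Type*} [Fintype α] (S : Set α) : Finset α :=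
  Finset.univ.filter (· ∈ S)

/-- The algebra group `1 + J` attached to a nilpotent algebra `J`. -/
def algebraGroup {A : Type*} [Ring A] (J : Set A) : Set A :=
  (fun a => 1 + a) '' J

/-- `χ` is constant on the superclasses of `G`: `u ~ v` iff `v − 1 ∈ G(u−1)G`. -/
def IsSuperclassFn {A : Type*} [Ring A] (G : Set A) (χ : A → ℂ) : Prop :=
  ∀ u ∈ G, ∀ v ∈ G, (∃ x ∈ G, ∃ y ∈ G, v - 1 = x * (u - 1) * y) → χ u = χ v

/-- Superinduction `SInd_H^G(χ)(g) = (1/(|G||H|)) Σ_{x,y∈G} χ̇(x(g−1)y + 1)`. -/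
def SInd {A : Type*} [Ring A] [Fintype A] (G H : Set A) (χ : A → ℂ) (g : A) : ℂ :=
  (((setFinset G).card : ℂ) * ((setFinset H).card : ℂ))⁻¹ *
    ∑ x ∈ setFinset G, ∑ y ∈ setFinset G,
      if x * (g - 1) * y + 1 ∈ H then χ (x * (g - 1) * y + 1) else 0

/-- Induction `Ind_H^G(χ)(g) = (1/|H|) Σ_{y∈G} χ̇(y⁻¹ g y)`. -/
def Ind {A : Type*} [Ring A] [Fintype A] (G H : Set A) (χ : A → ℂ) (g : A) : ℂ :=
  ((setFinset H).card : ℂ)⁻¹ *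
    ∑ y ∈ setFinset G,
      if Ring.inverse y * g * y ∈ H then χ (Ring.inverse y * g * y) else 0

/-!
The orbit sum `Σ_{x,y ∈ G} χ̇(x(g−1)y + 1)` defining `SInd` is unchanged when `g − 1` is replaced
by `a(g−1)b` with `a, b ∈ G`, so `SInd_H^G(χ)` is always a superclass function. On the other hand,
conjugating `x(g−1)y + 1` by `z ∈ G` merely translates `x` and `y`, so averaging `Ind_H^G(χ)` over
the elements `x(g−1)y + 1` gives exactly `SInd_H^G(χ)(g)`. Hence `Ind_H^G(χ)` is a superclass
function iff it equals this average.
-/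

open Finset

theorem mem_setFinset {α : Type*} [Fintype α] {S : Set α} {x : α} :
    x ∈ setFinset S ↔ x ∈ S := by
  simp [setFinset]

section Translation

variable {M β : Type*} [Monoid M] [AddCommMonoid β] {s : Finset M} {a : M}

theorem Finset.sum_comp_mul_left_of_isLeftRegular (ha : IsLeftRegular a)
    (hs : ∀ x ∈ s, a * x ∈ s) (f : M → β) :
    ∑ x ∈ s, f (a * x) = ∑ x ∈ s, f x := by
  let e : M ↪ M := ⟨(a * ·), ha⟩
  have hmap : s.map e = s := map_eq_of_subset fun _ hy => by
    obtain ⟨x, hx, rfl⟩ := mem_map.1 hy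
    exact hs x hx
  have h := sum_map s e f
  rw [hmap] at h
  exact h.symm

theorem Finset.sum_comp_mul_right_of_isRightRegular (ha : IsRightRegular a)
    (hs : ∀ x ∈ s, x * a ∈ s) (f : M → β) :
    ∑ x ∈ s, f (x * a) = ∑ x ∈ s, f x := by
  let e : M ↪ M := ⟨(· * a), ha⟩
  have hmap : s.map e = s := map_eq_of_subset fun _ hy => by
    obtain ⟨x, hx, rfl⟩ := mem_map.1 hy
    exact hs x hx
  have h := sum_map s e f
  rw [hmap] at h
  exact h.symm

end Translation

section UnitSubmonoid

variable {M β : Type*} [MonoidWithZero M] [Fintype M] [AddCommMonoid β]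
  {G : Submonoid M} {a : M}

theorem sum_setFinset_comp_mul_left (hG : ∀ x ∈ G, IsUnit x) (ha : a ∈ G) (f : M → β) :
    ∑ x ∈ setFinset (G : Set M), f (a * x) = ∑ x ∈ setFinset (G : Set M), f x :=
  sum_comp_mul_left_of_isLeftRegular (hG a ha).isRegular.left
    (fun _ hx => mem_setFinset.2 (G.mul_mem ha (mem_setFinset.1 hx))) f

theorem sum_setFinset_comp_mul_right (hG : ∀ x ∈ G, IsUnit x) (ha : a ∈ G) (f : M → β) :
    ∑ x ∈ setFinset (G : Set M), f (x * a) = ∑ x ∈ setFinset (G : Set M), f x :=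
  sum_comp_mul_right_of_isRightRegular (hG a ha).isRegular.right
    (fun _ hx => mem_setFinset.2 (G.mul_mem (mem_setFinset.1 hx) ha)) f

theorem sum_setFinset_comp_inverse_mul (hG : ∀ x ∈ G, IsUnit x) (ha : a ∈ G) (f : M → β) :
    ∑ x ∈ setFinset (G : Set M), f (Ring.inverse a * x) = ∑ x ∈ setFinset (G : Set M), f x := by
  rw [← sum_setFinset_comp_mul_left hG ha]
  simp only [Ring.inverse_mul_cancel_left a _ (hG a ha)]

theorem card_setFinset_ne_zero (G : Submonoid M) : ((setFinset (G : Set M)).card : ℂ) ≠ 0 :=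
  Nat.cast_ne_zero.2 (card_pos.2 ⟨1, mem_setFinset.2 G.one_mem⟩).ne'

end UnitSubmonoid

section AlgebraGroup

variable {A S : Type*} [Ring A] [SetLike S A] {J : S}

theorem mem_algebraGroup {x : A} : x ∈ algebraGroup (J : Set A) ↔ x - 1 ∈ J :=
  ⟨by rintro ⟨a, ha, rfl⟩; simpa using ha, fun h => ⟨x - 1, h, add_sub_cancel _ _⟩⟩

variable [NonUnitalSubsemiringClass S A]

variable (J) in
def algebraSubmonoid : Submonoid A where
  carrier := algebraGroup (J : Set A)
  one_mem' := mem_algebraGroup.2 (by simp)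
  mul_mem' {u v} hu hv := by
    rw [mem_algebraGroup] at *
    have h : u * v - 1 = (u - 1) * (v - 1) + (u - 1) + (v - 1) := by noncomm_ring
    rw [h]
    exact add_mem (add_mem (mul_mem hu hv) hu) hv

theorem isUnit_of_mem_algebraSubmonoid (hJ : ∀ a ∈ J, IsNilpotent a) {x : A}
    (hx : x ∈ algebraSubmonoid J) : IsUnit x := by
  obtain ⟨a, ha, rfl⟩ := hx
  exact (hJ a ha).isUnit_one_add

theorem mul_sub_one_mul_add_one_mem_algebraGroup {x g y : A}
    (hx : x ∈ algebraGroup (J : Set A)) (hg : g ∈ algebraGroup (J : Set A))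
    (hy : y ∈ algebraGroup (J : Set A)) : x * (g - 1) * y + 1 ∈ algebraGroup (J : Set A) := by
  rw [mem_algebraGroup] at *
  have h : x * (g - 1) * y + 1 - 1
      = ((x - 1) * (g - 1) + (g - 1)) * (y - 1) + ((x - 1) * (g - 1) + (g - 1)) := by
    noncomm_ring
  rw [h]
  exact add_mem (mul_mem (add_mem (mul_mem hx hg) hg) hy) (add_mem (mul_mem hx hg) hg)

end AlgebraGroup

section Superinduction

variable {M : Type*} [Ring M] [Fintype M] {G : Submonoid M} {H : Set M} {χ : M → ℂ}

variable (G H χ) in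
def superclassSum (c : M) : ℂ :=
  ∑ x ∈ setFinset (G : Set M), ∑ y ∈ setFinset (G : Set M),
    if x * c * y + 1 ∈ H then χ (x * c * y + 1) else 0

theorem SInd_eq_superclassSum (g : M) :
    SInd G H χ g = (((setFinset (G : Set M)).card : ℂ) * (setFinset H).card)⁻¹ *
      superclassSum G H χ (g - 1) := rfl

theorem superclassSum_mul_mul (hG : ∀ x ∈ G, IsUnit x) {a b : M} (ha : a ∈ G) (hb : b ∈ G)
    (c : M) : superclassSum G H χ (a * c * b) = superclassSum G H χ c := by
  let φ (w : M) : ℂ := if w + 1 ∈ H then χ (w + 1) else 0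
  calc superclassSum G H χ (a * c * b)
      = ∑ x ∈ setFinset (G : Set M), ∑ y ∈ setFinset (G : Set M), φ (x * a * c * (b * y)) := by
        simp only [superclassSum, φ, mul_assoc]
    _ = superclassSum G H χ c := by
        rw [sum_setFinset_comp_mul_right hG ha
          (fun x => ∑ y ∈ setFinset (G : Set M), φ (x * c * (b * y)))]
        exact sum_congr rfl fun x _ => sum_setFinset_comp_mul_left hG hb (fun y => φ (x * c * y))

theorem isSuperclassFn_SInd (hG : ∀ x ∈ G, IsUnit x) : IsSuperclassFn G (SInd G H χ) := by
  rintro u - v - ⟨x, hx, y, hy, hvu⟩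
  rw [SInd_eq_superclassSum, SInd_eq_superclassSum, hvu, superclassSum_mul_mul hG hx hy]

theorem sum_sum_Ind (hG : ∀ x ∈ G, IsUnit x) (c : M) :
    ∑ x ∈ setFinset (G : Set M), ∑ y ∈ setFinset (G : Set M), Ind G H χ (x * c * y + 1) =
      ((setFinset H).card : ℂ)⁻¹ * (setFinset (G : Set M)).card * superclassSum G H χ c := by
  let φ (w : M) : ℂ := if w + 1 ∈ H then χ (w + 1) else 0
  have hconj : ∀ z ∈ setFinset (G : Set M),
      ∑ x ∈ setFinset (G : Set M), ∑ y ∈ setFinset (G : Set M),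
        φ (Ring.inverse z * x * c * (y * z)) = superclassSum G H χ c := by
    intro z hz
    have hzG := mem_setFinset.1 hz
    rw [sum_setFinset_comp_inverse_mul hG hzG
      (fun x => ∑ y ∈ setFinset (G : Set M), φ (x * c * (y * z)))]
    exact sum_congr rfl fun x _ => sum_setFinset_comp_mul_right hG hzG (fun y => φ (x * c * y))
  calc ∑ x ∈ setFinset (G : Set M), ∑ y ∈ setFinset (G : Set M), Ind G H χ (x * c * y + 1)
      = ((setFinset H).card : ℂ)⁻¹ * ∑ z ∈ setFinset (G : Set M),
          ∑ x ∈ setFinset (G : Set M), ∑ y ∈ setFinset (G : Set M),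
            φ (Ring.inverse z * x * c * (y * z)) := by
        simp only [Ind, ← mul_sum]
        congr 1
        refine (sum_congr rfl fun x _ => sum_comm).trans (sum_comm.trans ?_)
        refine sum_congr rfl fun z hz => sum_congr rfl fun x _ => sum_congr rfl fun y _ => ?_
        have h : Ring.inverse z * (x * c * y + 1) * z = Ring.inverse z * x * c * (y * z) + 1 :=
          calc Ring.inverse z * (x * c * y + 1) * z
              = Ring.inverse z * x * c * (y * z) + Ring.inverse z * z := by noncomm_ring
            _ = _ := by rw [Ring.inverse_mul_cancel z (hG z (mem_setFinset.1 hz))]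
        simp only [φ, h]
    _ = _ := by rw [sum_congr rfl hconj, sum_const, nsmul_eq_mul, mul_assoc]

theorem sum_sum_Ind_eq_SInd (hG : ∀ x ∈ G, IsUnit x) (g : M) :
    ∑ x ∈ setFinset (G : Set M), ∑ y ∈ setFinset (G : Set M), Ind G H χ (x * (g - 1) * y + 1) =
      ((setFinset (G : Set M)).card : ℂ) ^ 2 * SInd G H χ g := by
  have hG0 := card_setFinset_ne_zero G
  rw [sum_sum_Ind hG, SInd_eq_superclassSum]
  field_simp

theorem SInd_eq_Ind_of_isSuperclassFn_Ind (hG : ∀ x ∈ G, IsUnit x)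
    (hclosed : ∀ x ∈ G, ∀ g ∈ G, ∀ y ∈ G, x * (g - 1) * y + 1 ∈ G)
    (hInd : IsSuperclassFn G (Ind G H χ)) {g : M} (hg : g ∈ G) :
    SInd G H χ g = Ind G H χ g := by
  have hconst : ∀ x ∈ setFinset (G : Set M), ∀ y ∈ setFinset (G : Set M),
      Ind G H χ (x * (g - 1) * y + 1) = Ind G H χ g := fun x hx y hy =>
    have hx := mem_setFinset.1 hx
    have hy := mem_setFinset.1 hy
    (hInd g hg _ (hclosed x hx g hg y hy) ⟨x, hx, y, hy, add_sub_cancel_right _ _⟩).symm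
  have hsum := sum_sum_Ind_eq_SInd (H := H) (χ := χ) hG g
  rw [sum_congr rfl fun x hx => sum_congr rfl (hconst x hx), sum_const, sum_const,
    nsmul_eq_mul, nsmul_eq_mul, ← mul_assoc, ← sq] at hsum
  exact (mul_left_cancel₀ (pow_ne_zero 2 (card_setFinset_ne_zero G)) hsum).symm

end Superinduction

theorem ind_superclass_iff_sind_eq_ind_general
    (F : Type*) [Field F]
    (A : Type*) [Ring A] [Algebra F A] [Fintype A]
    (J J' : NonUnitalSubalgebra F A)
    (hnil : ∃ k : ℕ, ∀ l : List A, (∀ x ∈ l, x ∈ J) → k ≤ l.length → l.prod = 0) :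
    (∀ χ : A → ℂ, IsSuperclassFn (algebraGroup (J' : Set A)) χ →
        IsSuperclassFn (algebraGroup (J : Set A))
          (Ind (algebraGroup (J : Set A)) (algebraGroup (J' : Set A)) χ)) ↔
    (∀ χ : A → ℂ, IsSuperclassFn (algebraGroup (J' : Set A)) χ →
        ∀ g ∈ algebraGroup (J : Set A),
          SInd (algebraGroup (J : Set A)) (algebraGroup (J' : Set A)) χ g =
            Ind (algebraGroup (J : Set A)) (algebraGroup (J' : Set A)) χ g) := by
  obtain ⟨k, hk⟩ := hnil
  have hJ : ∀ a ∈ J, IsNilpotent a := fun a ha =>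
    ⟨k, by simpa using hk (List.replicate k a) (fun x hx => List.eq_of_mem_replicate hx ▸ ha)⟩
  have hG : ∀ x ∈ algebraSubmonoid J, IsUnit x := fun _ => isUnit_of_mem_algebraSubmonoid hJ
  constructor
  · intro hInd χ hχ g hg
    exact SInd_eq_Ind_of_isSuperclassFn_Ind (G := algebraSubmonoid J) hG
      (fun _ hx _ hg _ hy => mul_sub_one_mul_add_one_mem_algebraGroup hx hg hy) (hInd χ hχ) hg
  · intro hEq χ hχ u hu v hv huv
    rw [← hEq χ hχ u hu, ← hEq χ hχ v hv]
    exact isSuperclassFn_SInd (G := algebraSubmonoid J) hG u hu v hv huv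

theorem ind_superclass_iff_sind_eq_ind
    (F : Type*) [Field F] [Fintype F]
    (A : Type*) [Ring A] [Algebra F A] [Fintype A]
    (J J' : NonUnitalSubalgebra F A)
    (hnil : ∃ k : ℕ, ∀ l : List A, (∀ x ∈ l, x ∈ J) → k ≤ l.length → l.prod = 0)
    (hsub : (J' : Set A) ⊆ (J : Set A)) :
    (∀ χ : A → ℂ, IsSuperclassFn (algebraGroup (J' : Set A)) χ →
        IsSuperclassFn (algebraGroup (J : Set A))
          (Ind (algebraGroup (J : Set A)) (algebraGroup (J' : Set A)) χ)) ↔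
    (∀ χ : A → ℂ, IsSuperclassFn (algebraGroup (J' : Set A)) χ →
        ∀ g ∈ algebraGroup (J : Set A),
          SInd (algebraGroup (J : Set A)) (algebraGroup (J' : Set A)) χ g =
            Ind (algebraGroup (J : Set A)) (algebraGroup (J' : Set A)) χ g) :=
  ind_superclass_iff_sind_eq_ind_general F A J J' hnil
end
end

section
/- Let H be an algebra subgroup of an algebra group G = 1 + J over F_q, and suppose: (1) no two distinct superclasses of H are contained in the same superclass of G (equivalently, if h, h' ∈ H lie in the same superclass of G then they lie in the same superclass of H); and (2) x(h−1)+1 ∈ H for all x ∈ G and h ∈ H. Then SInd_H^G(χ) = Ind_H^G(χ) for every superclass function χ of H. -/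
/-!
STATEMENT 4: Let H be an algebra subgroup of an algebra group G = 1 + J over F_q, and
suppose (1) no two distinct superclasses of H are contained in the same superclass of G
(i.e. if h, h′ ∈ H lie in the same superclass of G then they lie in the same superclass
of H), and (2) x(h−1)+1 ∈ H for all x ∈ G and h ∈ H.  Then SInd_H^G(χ) = Ind_H^G(χ)
for every superclass function χ of H.
-/
open scoped Classical

noncomputable section

section Aux

variable {F : Type*} [Field F] {A : Type*} [Ring A] [Algebra F A]

lemma mem_algebraGroup_iff (J : Set A) (g : A) :
    g ∈ algebraGroup J ↔ g - 1 ∈ J := by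
  constructor
  · rintro ⟨a, ha, rfl⟩; simpa using ha
  · intro h; exact ⟨g - 1, h, by simp⟩

lemma one_mem_algebraGroup (J : NonUnitalSubalgebra F A) :
    (1 : A) ∈ algebraGroup (J : Set A) := by
  rw [mem_algebraGroup_iff]; rw [sub_self]; exact J.zero_mem

lemma mul_mem_algebraGroup (J : NonUnitalSubalgebra F A) {g h : A}
    (hg : g ∈ algebraGroup (J : Set A)) (hh : h ∈ algebraGroup (J : Set A)) :
    g * h ∈ algebraGroup (J : Set A) := by
  rw [mem_algebraGroup_iff] at hg hh ⊢
  have : g * h - 1 = (g - 1) + (h - 1) + (g - 1) * (h - 1) := by noncomm_ring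
  rw [this]
  exact add_mem (add_mem hg hh) (mul_mem hg hh)

lemma sandwich_mem (J : NonUnitalSubalgebra F A) {g h a : A}
    (hg : g ∈ algebraGroup (J : Set A)) (hh : h ∈ algebraGroup (J : Set A))
    (ha : a ∈ J) : g * a * h ∈ J := by
  rw [mem_algebraGroup_iff] at hg hh
  have : g * a * h = a + (g - 1) * a + a * (h - 1) + (g - 1) * a * (h - 1) := by
    noncomm_ring
  rw [this]
  exact add_mem (add_mem (add_mem ha (mul_mem hg ha)) (mul_mem ha hh))
    (mul_mem (mul_mem hg ha) hh)

lemma inverse_spec (J : NonUnitalSubalgebra F A)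
    (hnil : ∃ k : ℕ, ∀ l : List A, (∀ x ∈ l, x ∈ J) → k ≤ l.length → l.prod = 0)
    {g : A} (hg : g ∈ algebraGroup (J : Set A)) :
    Ring.inverse g ∈ algebraGroup (J : Set A) ∧
      Ring.inverse g * g = 1 ∧ g * Ring.inverse g = 1 := by
  obtain ⟨k, hk⟩ := hnil
  rw [mem_algebraGroup_iff] at hg
  set a := g - 1 with ha
  have hpow : a ^ (k + 1) = 0 := by
    have := hk (List.replicate (k + 1) a) (by
      intro x hx; rw [List.eq_of_mem_replicate hx]; exact hg) (by simp)
    simpa using this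
  set n := k + 1 with hn
  have hnegpow : (-a) ^ n = 0 := by
    rw [neg_pow, hpow, mul_zero]
  set s : A := ∑ i ∈ Finset.range n, (-a) ^ i with hs
  have hgeq : g = 1 + a := by rw [ha]; abel
  have hsg : s * g = 1 := by
    have h1 : s * (-a - 1) = -1 := by
      rw [geom_sum_mul, hnegpow]; abel
    have : s * g = -(s * (-a - 1)) := by rw [hgeq]; noncomm_ring
    rw [this, h1]; simp
  have hgs : g * s = 1 := by
    have h1 : (-a - 1) * s = -1 := by
      rw [mul_geom_sum, hnegpow]; abel
    have : g * s = -((-a - 1) * s) := by rw [hgeq]; noncomm_ring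
    rw [this, h1]; simp
  have hsJ : s - 1 ∈ J := by
    have hp : ∀ m : ℕ, 1 ≤ m → (-a) ^ m ∈ J := by
      intro m hm
      induction m, hm using Nat.le_induction with
      | base => simpa using neg_mem hg
      | succ m hm ih => rw [pow_succ]; exact mul_mem ih (neg_mem hg)
    have : ∀ m : ℕ, 1 ≤ m → (∑ i ∈ Finset.range m, (-a) ^ i) - 1 ∈ J := by
      intro m hm
      induction m, hm using Nat.le_induction with
      | base =>
          simp only [Finset.range_one, Finset.sum_singleton, pow_zero, sub_self]
          exact J.zero_mem
      | succ m hm ih =>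
          rw [Finset.sum_range_succ]
          have : (∑ i ∈ Finset.range m, (-a) ^ i) + (-a) ^ m - 1
              = ((∑ i ∈ Finset.range m, (-a) ^ i) - 1) + (-a) ^ m := by abel
          rw [this]
          exact add_mem ih (hp m hm)
    exact this n (by omega)
  have hu : Ring.inverse g = s :=
    Ring.inverse_unit ⟨g, s, hgs, hsg⟩
  refine ⟨?_, ?_, ?_⟩
  · rw [hu, mem_algebraGroup_iff]; exact hsJ
  · rw [hu]; exact hsg
  · rw [hu]; exact hgs

end Aux

theorem sind_eq_ind_of_superclass_separation_and_left_stability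
    (F : Type*) [Field F] [Fintype F]
    (A : Type*) [Ring A] [Algebra F A] [Fintype A]
    (J J' : NonUnitalSubalgebra F A)
    (hnil : ∃ k : ℕ, ∀ l : List A, (∀ x ∈ l, x ∈ J) → k ≤ l.length → l.prod = 0)
    (hsub : (J' : Set A) ⊆ (J : Set A))
    (h1 : ∀ h ∈ algebraGroup (J' : Set A), ∀ h' ∈ algebraGroup (J' : Set A),
      (∃ x ∈ algebraGroup (J : Set A), ∃ y ∈ algebraGroup (J : Set A),
          h' - 1 = x * (h - 1) * y) →
      (∃ x ∈ algebraGroup (J' : Set A), ∃ y ∈ algebraGroup (J' : Set A),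
          h' - 1 = x * (h - 1) * y))
    (h2 : ∀ x ∈ algebraGroup (J : Set A), ∀ h ∈ algebraGroup (J' : Set A),
      x * (h - 1) + 1 ∈ algebraGroup (J' : Set A)) :
    ∀ χ : A → ℂ, IsSuperclassFn (algebraGroup (J' : Set A)) χ →
      ∀ g ∈ algebraGroup (J : Set A),
        SInd (algebraGroup (J : Set A)) (algebraGroup (J' : Set A)) χ g =
          Ind (algebraGroup (J : Set A)) (algebraGroup (J' : Set A)) χ g := by
  intro χ hχ g hg
  set G := algebraGroup (J : Set A) with hGdef
  set H := algebraGroup (J' : Set A) with hHdef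
  have hmemfin : ∀ x : A, x ∈ setFinset G ↔ x ∈ G := by
    intro x; simp [setFinset]
  have hgJ : g - 1 ∈ J := (mem_algebraGroup_iff (J : Set A) g).1 hg
  -- the key pointwise identity
  have key : ∀ y ∈ setFinset G, ∀ x ∈ setFinset G,
      (if x * (g - 1) * y + 1 ∈ H then χ (x * (g - 1) * y + 1) else 0)
        = (if Ring.inverse y * g * y ∈ H then χ (Ring.inverse y * g * y) else 0) := by
    intro y hy' x hx'
    have hy : y ∈ G := (hmemfin y).1 hy'
    have hx : x ∈ G := (hmemfin x).1 hx'
    obtain ⟨hyiG, hyiy, hyyi⟩ := inverse_spec J hnil hy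
    set yi := Ring.inverse y with hyi
    set k := yi * g * y with hkdef
    have hk1 : k - 1 = yi * (g - 1) * y := by
      have h3 : yi * (g - 1) * y = yi * g * y - yi * y := by noncomm_ring
      rw [hkdef, h3, hyiy]
    have hkG : k ∈ G := by
      rw [hGdef, mem_algebraGroup_iff]
      rw [hk1]
      exact sandwich_mem J hyiG hy hgJ
    have hz : x * y ∈ G := mul_mem_algebraGroup J hx hy
    have heq : x * (g - 1) * y = x * y * (k - 1) := by
      have h3 : x * y * (k - 1) = x * (y * yi) * ((g - 1) * y) := by
        rw [hk1]; noncomm_ring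
      rw [h3, hyyi]; noncomm_ring
    rw [heq]
    by_cases hkH : k ∈ H
    · have hmem : x * y * (k - 1) + 1 ∈ H := h2 (x * y) hz k hkH
      rw [if_pos hmem, if_pos hkH]
      refine (hχ k hkH _ hmem ?_).symm
      exact h1 k hkH _ hmem ⟨x * y, hz, 1, one_mem_algebraGroup J, by noncomm_ring⟩
    · have hnot : x * y * (k - 1) + 1 ∉ H := by
        intro hmem
        apply hkH
        obtain ⟨hziG, hziz, hzzi⟩ := inverse_spec J hnil hz
        set zi := Ring.inverse (x * y) with hzi
        have h4 : zi * ((x * y * (k - 1) + 1) - 1) + 1 = k := by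
          have h5 : zi * ((x * y * (k - 1) + 1) - 1) + 1 = (zi * (x * y)) * (k - 1) + 1 := by
            noncomm_ring
          rw [h5, hziz]; noncomm_ring
        have := h2 zi hziG _ hmem
        rwa [h4] at this
      rw [if_neg hnot, if_neg hkH]
  have hGcard : ((setFinset G).card : ℂ) ≠ 0 := by
    have h1 : (1 : A) ∈ setFinset G := (hmemfin 1).2 (one_mem_algebraGroup J)
    have : 0 < (setFinset G).card := Finset.card_pos.2 ⟨1, h1⟩
    exact_mod_cast this.ne'
  have hsum : (∑ x ∈ setFinset G, ∑ y ∈ setFinset G,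
        if x * (g - 1) * y + 1 ∈ H then χ (x * (g - 1) * y + 1) else 0)
      = ((setFinset G).card : ℂ) * ∑ y ∈ setFinset G,
          (if Ring.inverse y * g * y ∈ H then χ (Ring.inverse y * g * y) else 0) := by
    rw [Finset.sum_comm, Finset.mul_sum]
    refine Finset.sum_congr rfl ?_
    intro y hy
    rw [Finset.sum_congr rfl (key y hy), Finset.sum_const, nsmul_eq_mul]
  simp only [SInd, Ind]
  rw [hsum, mul_inv]
  rw [show ((setFinset G).card : ℂ)⁻¹ * ((setFinset H).card : ℂ)⁻¹ *
      (((setFinset G).card : ℂ) * ∑ y ∈ setFinset G,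
        (if Ring.inverse y * g * y ∈ H then χ (Ring.inverse y * g * y) else 0))
    = (((setFinset G).card : ℂ)⁻¹ * ((setFinset G).card : ℂ)) *
        (((setFinset H).card : ℂ)⁻¹ * ∑ y ∈ setFinset G,
          (if Ring.inverse y * g * y ∈ H then χ (Ring.inverse y * g * y) else 0)) from by
      ring, inv_mul_cancel₀ hGcard, one_mul]
end
end

section
/- Let q = 2, let U_3 × U_2 be embedded block-diagonally in U_5 (matrices u ∈ U_5 with u_{ij} = 0 for i ≠ j unless i < j ≤ 3 or 4 ≤ i < j), and let 1 denote the trivial character of U_3 × U_2 (which is a supercharacter). Then the superclass function SInd_{U_3×U_2}^{U_5}(1) is not a character of U_5, i.e. it is not a nonnegative-integer linear combination of irreducible characters of U_5. -/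
/-!
STATEMENT 13: Let q = 2, let U_3 × U_2 be embedded block-diagonally in U_5, and let 1
denote the trivial character of U_3 × U_2.  Then the superclass function
SInd_{U_3×U_2}^{U_5}(1) is not a character of U_5: it is not the trace of any matrix
representation of U_5, equivalently not a nonnegative-integer combination of
irreducible characters.  (0-based indices: the 1-based conditions i < j ≤ 3 and
4 ≤ i < j read i < j ∧ (j:ℕ) ≤ 2 and 3 ≤ (i:ℕ) ∧ i < j.)
-/
open scoped Classical

noncomputable section

/-- A strict partial order on `{1,…,n}` that is a subrelation of the usual order. -/
def IsPatternOrder {n : ℕ} (P : Fin n → Fin n → Prop) : Prop :=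
  (∀ i j, P i j → i < j) ∧ ∀ i j k, P i j → P j k → P i k

/-- The pattern group `U_P` of unipotent upper-triangular matrices supported on `P`. -/
def patternGroup (F : Type*) [Field F] {n : ℕ} (P : Fin n → Fin n → Prop) :
    Set (Matrix (Fin n) (Fin n) F) :=
  {u | (∀ i, u i i = 1) ∧ ∀ i j, i ≠ j → u i j ≠ 0 → P i j}

/-- The block-diagonal subgroup `U_3 × U_2 ⊆ U_5` over `F_2`. -/
def U3xU2 : Set (Matrix (Fin 5) (Fin 5) (ZMod 2)) :=
  {u | (∀ i, u i i = 1) ∧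
    ∀ i j, i ≠ j → u i j ≠ 0 → (i < j ∧ (j : ℕ) ≤ 2) ∨ (3 ≤ (i : ℕ) ∧ i < j)}

/-!
Let `a = 1 + E₄₅`, `b = 1 + E₂₃`, `c = 1 + E₁₃` (`transvection 3 4 1`, `transvection 1 2 1`,
`transvection 0 2 1` with 0-based indices). They are commuting involutions in `U₅`, so for any
representation `ρ` the matrix `∏_{x ∈ {a, b, c}} (1 + ρ x) / 2` is an idempotent, whose trace
`(1/8) ∑_{e ∈ ⟨a, b, c⟩} tr ρ(e)` is a natural number. Counting the pairs `(x, y) ∈ U₅²` with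
`x (e - 1) y + 1 ∈ U₃ × U₂` shows that `SInd(1)` takes the values `64, 8, 16, 16, 4, 4, 16, 4` at
`1, a, b, c, ab, ac, bc, abc`; their sum `132` is not divisible by `8`.
-/

open Finset Matrix

local notation "U₅" => patternGroup (ZMod 2) (fun i j : Fin 5 => i < j)

theorem Matrix.exists_trace_eq_natCast_of_isIdempotentElem {K n : Type*} [Field K] [Fintype n]
    [DecidableEq n] {P : Matrix n n K} (hP : IsIdempotentElem P) : ∃ r : ℕ, P.trace = r := by
  have hf : IsIdempotentElem (toLin' P) := hP.map toLinAlgEquiv'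
  exact ⟨_, by rw [← trace_toLin'_eq, (LinearMap.IsIdempotentElem.isProj_range _ hf).trace]⟩

theorem isIdempotentElem_inv_two_smul_one_add {K A : Type*} [Field K] [NeZero (2 : K)] [Ring A]
    [Algebra K A] {a : A} (ha : a * a = 1) : IsIdempotentElem ((2⁻¹ : K) • (1 + a)) := by
  have hsq : (1 + a) * (1 + a) = (2 : K) • (1 + a) := by
    rw [add_mul, mul_add, mul_add, ha, two_smul]; noncomm_ring
  rw [IsIdempotentElem, smul_mul_smul, hsq, smul_smul, mul_assoc, inv_mul_cancel₀ two_ne_zero,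
    mul_one]

theorem Matrix.exists_trace_eq_eight_mul_of_commute {K n : Type*} [Field K] [NeZero (2 : K)]
    [Fintype n] [DecidableEq n] {A B C : Matrix n n K} (hA : A * A = 1) (hB : B * B = 1)
    (hC : C * C = 1) (hAB : Commute A B) (hAC : Commute A C) (hBC : Commute B C) :
    ∃ r : ℕ, ((1 + A) * (1 + B) * (1 + C)).trace = 8 * r := by
  have hcomm {X Y : Matrix n n K} (h : Commute X Y) :
      Commute ((2⁻¹ : K) • (1 + X)) ((2⁻¹ : K) • (1 + Y)) :=
    (((Commute.one_left _).add_left ((Commute.one_right X).add_right h)).smul_left _).smul_right _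
  have hP := ((isIdempotentElem_inv_two_smul_one_add hA).mul_of_commute (hcomm hAB)
    (isIdempotentElem_inv_two_smul_one_add hB)).mul_of_commute
    ((hcomm hAC).mul_left (hcomm hBC)) (isIdempotentElem_inv_two_smul_one_add (K := K) hC)
  obtain ⟨r, hr⟩ := exists_trace_eq_natCast_of_isIdempotentElem hP
  refine ⟨r, ?_⟩
  rw [smul_mul_smul, smul_mul_smul, trace_smul, smul_eq_mul] at hr
  rw [← hr]
  field_simp
  norm_num

theorem exists_sum_eq_eight_mul_of_commute {M K n : Type*} [Monoid M] [Field K] [NeZero (2 : K)]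
    [Fintype n] [DecidableEq n] {S : Set M} {ρ : M → Matrix n n K} {χ : M → K}
    (hmul : ∀ u ∈ S, ∀ v ∈ S, ρ (u * v) = ρ u * ρ v) (hone : ρ 1 = 1)
    (hχ : ∀ g ∈ S, χ g = (ρ g).trace) (hS : ∀ u ∈ S, ∀ v ∈ S, u * v ∈ S) (hS₁ : 1 ∈ S)
    {a b c : M} (ha : a ∈ S) (hb : b ∈ S) (hc : c ∈ S) (ha₂ : a * a = 1) (hb₂ : b * b = 1)
    (hc₂ : c * c = 1) (hab : Commute a b) (hac : Commute a c) (hbc : Commute b c) :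
    ∃ r : ℕ, χ 1 + χ a + χ b + χ c + χ (a * b) + χ (a * c) + χ (b * c) + χ (a * (b * c)) =
      8 * r := by
  have hsq {x : M} (hx : x ∈ S) (hx₂ : x * x = 1) : ρ x * ρ x = 1 := by
    rw [← hmul x hx x hx, hx₂, hone]
  have hcomm {x y : M} (hx : x ∈ S) (hy : y ∈ S) (h : Commute x y) : Commute (ρ x) (ρ y) := by
    rw [Commute, SemiconjBy, ← hmul x hx y hy, ← hmul y hy x hx, h.eq]
  obtain ⟨r, hr⟩ := exists_trace_eq_eight_mul_of_commute (hsq ha ha₂) (hsq hb hb₂)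
    (hsq hc hc₂) (hcomm ha hb hab) (hcomm ha hc hac) (hcomm hb hc hbc)
  refine ⟨r, ?_⟩
  have hexp : (1 + ρ a) * (1 + ρ b) * (1 + ρ c) = ρ 1 + ρ a + ρ b + ρ c + ρ (a * b) +
      ρ (a * c) + ρ (b * c) + ρ (a * (b * c)) := by
    rw [hone, hmul a ha b hb, hmul a ha c hc, hmul b hb c hc, hmul a ha _ (hS b hb c hc),
      hmul b hb c hc]
    noncomm_ring
  rw [← hr, hexp]
  simp only [trace_add, hχ _ hS₁, hχ a ha, hχ b hb, hχ c hc, hχ _ (hS a ha b hb),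
    hχ _ (hS a ha c hc), hχ _ (hS b hb c hc), hχ _ (hS a ha _ (hS b hb c hc))]

theorem one_mem_patternGroup (F : Type*) [Field F] {n : ℕ} (P : Fin n → Fin n → Prop) :
    1 ∈ patternGroup F P :=
  ⟨fun _ => one_apply_eq _, fun _ _ hij h => absurd (one_apply_ne hij) h⟩

theorem IsPatternOrder.mul_mem_patternGroup {F : Type*} [Field F] {n : ℕ}
    {P : Fin n → Fin n → Prop} (hP : IsPatternOrder P) {u v : Matrix (Fin n) (Fin n) F}
    (hu : u ∈ patternGroup F P) (hv : v ∈ patternGroup F P) : u * v ∈ patternGroup F P := by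
  have support {w : Matrix (Fin n) (Fin n) F} (hw : w ∈ patternGroup F P) {i j : Fin n}
      (hij : w i j ≠ 0) : i = j ∨ P i j := by
    by_cases h : i = j
    · exact .inl h
    · exact .inr (hw.2 i j h hij)
  refine ⟨fun i => ?_, fun i j hij h => ?_⟩
  · rw [mul_apply, sum_eq_single i, hu.1, hv.1, one_mul]
    · intro k _ hki
      by_contra h
      rcases support hu (left_ne_zero_of_mul h) with rfl | hik
      · exact hki rfl
      rcases support hv (right_ne_zero_of_mul h) with rfl | hki'
      · exact hki rfl
      exact (hP.1 i k hik).asymm (hP.1 k i hki')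
    · simp
  · rw [mul_apply] at h
    obtain ⟨k, -, hk⟩ := exists_ne_zero_of_sum_ne_zero h
    rcases support hu (left_ne_zero_of_mul hk) with rfl | hik
    · exact (support hv (right_ne_zero_of_mul hk)).resolve_left hij
    rcases support hv (right_ne_zero_of_mul hk) with rfl | hkj
    · exact hik
    exact hP.2 i k j hik hkj

theorem transvection_mem_patternGroup {F : Type*} [Field F] {n : ℕ}
    {P : Fin n → Fin n → Prop} (hP : IsPatternOrder P) {i j : Fin n} (hij : P i j) (c : F) :
    transvection i j c ∈ patternGroup F P := by
  have hne : i ≠ j := (hP.1 i j hij).ne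
  refine ⟨fun k => ?_, fun k l hkl h => ?_⟩
  · simp only [transvection, Matrix.add_apply, one_apply_eq, single_apply]
    grind
  · simp only [transvection, Matrix.add_apply, one_apply_ne hkl, single_apply] at h
    grind

def ofCoords (v : Fin 10 → ZMod 2) : Matrix (Fin 5) (Fin 5) (ZMod 2) :=
  !![1, v 0, v 1, v 2, v 3;
     0, 1,   v 4, v 5, v 6;
     0, 0,   1,   v 7, v 8;
     0, 0,   0,   1,   v 9;
     0, 0,   0,   0,   1]

def coords (u : Matrix (Fin 5) (Fin 5) (ZMod 2)) : Fin 10 → ZMod 2 :=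
  ![u 0 1, u 0 2, u 0 3, u 0 4, u 1 2, u 1 3, u 1 4, u 2 3, u 2 4, u 3 4]

theorem coords_ofCoords (v : Fin 10 → ZMod 2) : coords (ofCoords v) = v := by
  funext i; fin_cases i <;> rfl

theorem ofCoords_injective : Function.Injective ofCoords :=
  Function.LeftInverse.injective coords_ofCoords

theorem ofCoords_mem (v : Fin 10 → ZMod 2) : ofCoords v ∈ U₅ := by
  refine ⟨fun i => ?_, fun i j hij h => ?_⟩ <;> fin_cases i <;> (try fin_cases j) <;>
    simp_all [ofCoords]

theorem ofCoords_coords {u : Matrix (Fin 5) (Fin 5) (ZMod 2)} (hu : u ∈ U₅) :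
    ofCoords (coords u) = u := by
  have hlow (i j : Fin 5) (hji : j < i) : u i j = 0 := by
    by_contra h
    exact (hu.2 i j hji.ne' h).asymm hji
  ext i j
  fin_cases i <;> fin_cases j <;> simp [ofCoords, coords, hu.1, hlow]

theorem U3xU2_subset : U3xU2 ⊆ U₅ := fun _ hu =>
  ⟨hu.1, fun i j hij h => (hu.2 i j hij h).elim And.left And.right⟩

theorem setFinset_eq_map_ofCoords {S : Set (Matrix (Fin 5) (Fin 5) (ZMod 2))} (hS : S ⊆ U₅) :
    setFinset S = ({v | ofCoords v ∈ S} : Finset _).map ⟨ofCoords, ofCoords_injective⟩ := by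
  ext u
  simp only [setFinset, mem_filter, mem_univ, true_and, mem_map, Function.Embedding.coeFn_mk]
  exact ⟨fun hu => ⟨coords u, by rwa [ofCoords_coords (hS hu)], ofCoords_coords (hS hu)⟩,
    by rintro ⟨v, hv, rfl⟩; exact hv⟩

theorem card_setFinset_U₅ : (setFinset U₅).card = 1024 := by
  simp [setFinset_eq_map_ofCoords subset_rfl, ofCoords_mem]

theorem ofCoords_mem_U3xU2_iff (v : Fin 10 → ZMod 2) :
    ofCoords v ∈ U3xU2 ↔ v 2 = 0 ∧ v 3 = 0 ∧ v 5 = 0 ∧ v 6 = 0 ∧ v 7 = 0 ∧ v 8 = 0 := by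
  simp [U3xU2, Fin.forall_fin_succ, ofCoords, and_assoc]

set_option maxRecDepth 10000 in
theorem card_setFinset_U3xU2 : (setFinset U3xU2).card = 16 := by
  simp only [setFinset_eq_map_ofCoords U3xU2_subset, card_map, ofCoords_mem_U3xU2_iff]
  decide

theorem Finset.card_filter_and_eq_card_mul {α β : Type*} [Fintype α] [Fintype β]
    (Q : β → Prop) [DecidablePred Q] (D : α → β → Prop) [DecidableRel D] {m : ℕ}
    (hD : ∀ w, Q w → #{v | D v w} = m) :
    #{p : α × β | Q p.2 ∧ D p.1 p.2} = #{w | Q w} * m := by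
  rw [card_filter, Fintype.sum_prod_type_right, card_filter, sum_mul]
  refine sum_congr rfl fun w _ => ?_
  by_cases hw : Q w
  · simp only [hw, true_and, if_true, one_mul]
    rw [← hD w hw, card_filter]
  · simp [hw]

theorem SInd_U₅_const_one_eq_card (g : Matrix (Fin 5) (Fin 5) (ZMod 2)) :
    SInd U₅ U3xU2 (fun _ => 1) g =
      #{p : (Fin 10 → ZMod 2) × (Fin 10 → ZMod 2) |
        ofCoords p.1 * (g - 1) * ofCoords p.2 + 1 ∈ U3xU2} / 16384 := by
  rw [SInd, card_setFinset_U₅, card_setFinset_U3xU2, setFinset_eq_map_ofCoords subset_rfl,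
    filter_true_of_mem fun v _ => ofCoords_mem v, card_filter, Fintype.sum_prod_type]
  simp only [sum_map, Function.Embedding.coeFn_mk, Nat.cast_sum, Nat.cast_ite, Nat.cast_one,
    Nat.cast_zero]
  norm_num [div_eq_inv_mul]

-- `Q w ∧ D v w` is the solution over `𝔽₂` of the six equations saying that
-- `ofCoords v * (g - 1) * ofCoords w` vanishes outside the two diagonal blocks.
theorem SInd_U₅_eq_of_iff {g : Matrix (Fin 5) (Fin 5) (ZMod 2)} (Q : (Fin 10 → ZMod 2) → Prop)
    [DecidablePred Q] (D : (Fin 10 → ZMod 2) → (Fin 10 → ZMod 2) → Prop) [DecidableRel D]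
    {m : ℕ} (hcond : ∀ v w, ofCoords v * (g - 1) * ofCoords w + 1 ∈ U3xU2 ↔ Q w ∧ D v w)
    (hD : ∀ w, Q w → #{v | D v w} = m) :
    SInd U₅ U3xU2 (fun _ => 1) g = #{w | Q w} * m / 16384 := by
  rw [SInd_U₅_const_one_eq_card, filter_congr fun p _ => hcond p.1 p.2,
    card_filter_and_eq_card_mul Q D hD]
  push_cast
  rfl

theorem SInd_U₅_apply_one : SInd U₅ U3xU2 (fun _ => 1) 1 = 64 := by
  rw [SInd_U₅_eq_of_iff (fun _ => True) (fun _ _ => True) (m := 1024)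
    (fun v w => by simp [U3xU2, Fin.forall_fin_succ]) (fun _ _ => by simp)]
  norm_num

set_option maxRecDepth 10000 in
theorem SInd_U₅_apply_transvection_34 : SInd U₅ U3xU2 (fun _ => 1) (transvection 3 4 1) = 8 := by
  have hN : transvection (3 : Fin 5) 4 (1 : ZMod 2) - 1 =
      !![0, 0, 0, 0, 0; 0, 0, 0, 0, 0; 0, 0, 0, 0, 0; 0, 0, 0, 0, 1; 0, 0, 0, 0, 0] := by decide
  rw [SInd_U₅_eq_of_iff (fun _ => True) (fun v _ => v 2 = 0 ∧ v 5 = 0 ∧ v 7 = 0) (m := 128)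
    (fun v w => by rw [hN]; simp [U3xU2, Fin.forall_fin_succ, ofCoords]) (fun _ _ => by decide)]
  norm_num

set_option maxRecDepth 10000 in
theorem SInd_U₅_apply_transvection_12 : SInd U₅ U3xU2 (fun _ => 1) (transvection 1 2 1) = 16 := by
  have hN : transvection (1 : Fin 5) 2 (1 : ZMod 2) - 1 =
      !![0, 0, 0, 0, 0; 0, 0, 1, 0, 0; 0, 0, 0, 0, 0; 0, 0, 0, 0, 0; 0, 0, 0, 0, 0] := by decide
  rw [SInd_U₅_eq_of_iff (fun w => w 7 = 0 ∧ w 8 = 0) (fun _ _ => True) (m := 1024)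
    (fun v w => by rw [hN]; simp [U3xU2, Fin.forall_fin_succ, ofCoords]; grind)
    (fun _ _ => by simp),
    show #{w : Fin 10 → ZMod 2 | w 7 = 0 ∧ w 8 = 0} = 256 by decide]
  norm_num

set_option maxRecDepth 10000 in
theorem SInd_U₅_apply_transvection_02 : SInd U₅ U3xU2 (fun _ => 1) (transvection 0 2 1) = 16 := by
  have hN : transvection (0 : Fin 5) 2 (1 : ZMod 2) - 1 =
      !![0, 0, 1, 0, 0; 0, 0, 0, 0, 0; 0, 0, 0, 0, 0; 0, 0, 0, 0, 0; 0, 0, 0, 0, 0] := by decide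
  rw [SInd_U₅_eq_of_iff (fun w => w 7 = 0 ∧ w 8 = 0) (fun _ _ => True) (m := 1024)
    (fun v w => by rw [hN]; simp [U3xU2, Fin.forall_fin_succ, ofCoords])
    (fun _ _ => by simp),
    show #{w : Fin 10 → ZMod 2 | w 7 = 0 ∧ w 8 = 0} = 256 by decide]
  norm_num

set_option maxRecDepth 10000 in
theorem SInd_U₅_apply_transvection_12_02 :
    SInd U₅ U3xU2 (fun _ => 1) (transvection 1 2 1 * transvection 0 2 1) = 16 := by
  have hN : transvection (1 : Fin 5) 2 (1 : ZMod 2) * transvection 0 2 1 - 1 =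
      !![0, 0, 1, 0, 0; 0, 0, 1, 0, 0; 0, 0, 0, 0, 0; 0, 0, 0, 0, 0; 0, 0, 0, 0, 0] := by decide
  rw [SInd_U₅_eq_of_iff (fun w => w 7 = 0 ∧ w 8 = 0) (fun _ _ => True) (m := 1024)
    (fun v w => by rw [hN]; simp [U3xU2, Fin.forall_fin_succ, ofCoords]; grind)
    (fun _ _ => by simp),
    show #{w : Fin 10 → ZMod 2 | w 7 = 0 ∧ w 8 = 0} = 256 by decide]
  norm_num

set_option maxRecDepth 10000 in
theorem SInd_U₅_apply_transvection_34_12 :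
    SInd U₅ U3xU2 (fun _ => 1) (transvection 3 4 1 * transvection 1 2 1) = 4 := by
  have hN : transvection (3 : Fin 5) 4 (1 : ZMod 2) * transvection 1 2 1 - 1 =
      !![0, 0, 0, 0, 0; 0, 0, 1, 0, 0; 0, 0, 0, 0, 0; 0, 0, 0, 0, 1; 0, 0, 0, 0, 0] := by decide
  have hcount (c : ZMod 2) :
      #{v : Fin 10 → ZMod 2 | v 7 = 0 ∧ v 5 = c ∧ v 2 = v 0 * c} = 128 := by
    revert c; decide
  rw [SInd_U₅_eq_of_iff (fun w => w 7 = 0) (fun v w => v 7 = 0 ∧ v 5 = w 8 ∧ v 2 = v 0 * w 8)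
    (fun v w => by rw [hN]; simp [U3xU2, Fin.forall_fin_succ, ofCoords]; grind)
    (fun w _ => hcount (w 8)), show #{w : Fin 10 → ZMod 2 | w 7 = 0} = 512 by decide]
  norm_num

set_option maxRecDepth 10000 in
theorem SInd_U₅_apply_transvection_34_02 :
    SInd U₅ U3xU2 (fun _ => 1) (transvection 3 4 1 * transvection 0 2 1) = 4 := by
  have hN : transvection (3 : Fin 5) 4 (1 : ZMod 2) * transvection 0 2 1 - 1 =
      !![0, 0, 1, 0, 0; 0, 0, 0, 0, 0; 0, 0, 0, 0, 0; 0, 0, 0, 0, 1; 0, 0, 0, 0, 0] := by decide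
  have hcount (c : ZMod 2) : #{v : Fin 10 → ZMod 2 | v 2 = c ∧ v 5 = 0 ∧ v 7 = 0} = 128 := by
    revert c; decide
  rw [SInd_U₅_eq_of_iff (fun w => w 7 = 0) (fun v w => v 2 = w 8 ∧ v 5 = 0 ∧ v 7 = 0)
    (fun v w => by rw [hN]; simp [U3xU2, Fin.forall_fin_succ, ofCoords]; grind)
    (fun w _ => hcount (w 8)), show #{w : Fin 10 → ZMod 2 | w 7 = 0} = 512 by decide]
  norm_num

set_option maxRecDepth 10000 in
theorem SInd_U₅_apply_transvection_34_12_02 :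
    SInd U₅ U3xU2 (fun _ => 1) (transvection 3 4 1 * (transvection 1 2 1 * transvection 0 2 1)) =
      4 := by
  have hN :
      transvection (3 : Fin 5) 4 (1 : ZMod 2) * (transvection 1 2 1 * transvection 0 2 1) - 1 =
      !![0, 0, 1, 0, 0; 0, 0, 1, 0, 0; 0, 0, 0, 0, 0; 0, 0, 0, 0, 1; 0, 0, 0, 0, 0] := by decide
  have hcount (c : ZMod 2) :
      #{v : Fin 10 → ZMod 2 | v 5 = c ∧ v 7 = 0 ∧ v 2 = (v 0 + 1) * c} = 128 := by
    revert c; decide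
  rw [SInd_U₅_eq_of_iff (fun w => w 7 = 0)
    (fun v w => v 5 = w 8 ∧ v 7 = 0 ∧ v 2 = (v 0 + 1) * w 8)
    (fun v w => by rw [hN]; simp [U3xU2, Fin.forall_fin_succ, ofCoords]; grind)
    (fun w _ => hcount (w 8)), show #{w : Fin 10 → ZMod 2 | w 7 = 0} = 512 by decide]
  norm_num

theorem superinduced_trivial_character_not_a_character :
    ¬ ∃ (d : ℕ) (ρ : Matrix (Fin 5) (Fin 5) (ZMod 2) → Matrix (Fin d) (Fin d) ℂ),
      (∀ u ∈ patternGroup (ZMod 2) (fun i j : Fin 5 => i < j),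
        ∀ v ∈ patternGroup (ZMod 2) (fun i j : Fin 5 => i < j), ρ (u * v) = ρ u * ρ v) ∧
      ρ 1 = 1 ∧
      ∀ g ∈ patternGroup (ZMod 2) (fun i j : Fin 5 => i < j),
        SInd (patternGroup (ZMod 2) (fun i j : Fin 5 => i < j)) U3xU2 (fun _ => 1) g =
          (ρ g).trace := by
  rintro ⟨d, ρ, hmul, hone, htr⟩
  have hP : IsPatternOrder (fun i j : Fin 5 => i < j) := ⟨fun _ _ h => h, fun _ _ _ => lt_trans⟩
  have hmem (i j : Fin 5) (h : i < j) := transvection_mem_patternGroup hP h (1 : ZMod 2)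
  obtain ⟨r, hr⟩ := exists_sum_eq_eight_mul_of_commute hmul hone htr
    (fun _ hu _ hv => hP.mul_mem_patternGroup hu hv) (one_mem_patternGroup _ _)
    (hmem 3 4 (by decide)) (hmem 1 2 (by decide)) (hmem 0 2 (by decide))
    (by decide) (by decide) (by decide)
    (by unfold Commute SemiconjBy; decide) (by unfold Commute SemiconjBy; decide)
    (by unfold Commute SemiconjBy; decide)
  rw [SInd_U₅_apply_one, SInd_U₅_apply_transvection_34, SInd_U₅_apply_transvection_12,
    SInd_U₅_apply_transvection_02, SInd_U₅_apply_transvection_34_12,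
    SInd_U₅_apply_transvection_34_02, SInd_U₅_apply_transvection_12_02,
    SInd_U₅_apply_transvection_34_12_02] at hr
  norm_num at hr
  have h8r : 132 = 8 * r := by exact_mod_cast hr
  omega
end
end
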